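/- Let μ be the bilinear multiplication of 𝒵₂₇ on ℂ⁵ (e₁e₂ = e₃, e₁e₃ = -e₅, e₁e₄ = e₅, e₂e₁ = e₄, e₂e₃ = -e₅, e₂e₄ = e₅, other basis products zero) and λ the bilinear multiplication of 𝒵₂₈ on ℂ⁵ (e₁e₂ = e₃, e₁e₃ = -e₅, e₁e₄ = e₅, e₂e₁ = e₄, e₂e₂ = e₅, other basis products zero). Then μ degenerates to λ: there exists a family (g_t), t ∈ ℂ \ {0}, of invertible linear endomorphisms of ℂ⁵ such that for all x, y ∈ ℂ⁵ the map t ↦ g_t⁻¹(μ(g_t x, g_t y)) tends to λ(x,y) as t → 0 within ℂ \ {0}. -/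
import Mathlib


open Topology Filter

/-- The standard basis of `ℂ⁵`. -/
def ee (i : Fin 5) : Fin 5 → ℂ := Pi.single i 1

/-- Structure constants (0-indexed) of the algebra `𝒵₂₇`:
`e₁e₂ = e₃`, `e₁e₃ = -e₅`, `e₁e₄ = e₅`, `e₂e₁ = e₄`, `e₂e₃ = -e₅`, `e₂e₄ = e₅`. -/
def cZ27 (i j : Fin 5) : Fin 5 → ℂ :=
  if i = 0 ∧ j = 1 then ee 2
  else if i = 0 ∧ j = 2 then -ee 4
  else if i = 0 ∧ j = 3 then ee 4
  else if i = 1 ∧ j = 0 then ee 3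
  else if i = 1 ∧ j = 2 then -ee 4
  else if i = 1 ∧ j = 3 then ee 4
  else 0

/-- Structure constants (0-indexed) of the algebra `𝒵₂₈`:
`e₁e₂ = e₃`, `e₁e₃ = -e₅`, `e₁e₄ = e₅`, `e₂e₁ = e₄`, `e₂e₂ = e₅`. -/
def cZ28 (i j : Fin 5) : Fin 5 → ℂ :=
  if i = 0 ∧ j = 1 then ee 2
  else if i = 0 ∧ j = 2 then -ee 4
  else if i = 0 ∧ j = 3 then ee 4
  else if i = 1 ∧ j = 0 then ee 3
  else if i = 1 ∧ j = 1 then ee 4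
  else 0

noncomputable def gfun (s : ℂ) : (Fin 5 → ℂ) →ₗ[ℂ] (Fin 5 → ℂ) where
  toFun x := ![x 0, s * x 1, s * x 2, x 1 + s * x 3, x 2 + s * x 4]
  map_add' x y := by
    funext i; fin_cases i <;> simp [Matrix.cons_val_zero, Matrix.cons_val_one] <;> ring
  map_smul' c x := by
    funext i; fin_cases i <;> simp [Matrix.cons_val_zero, Matrix.cons_val_one] <;> ring

noncomputable def ginv (s : ℂ) : (Fin 5 → ℂ) →ₗ[ℂ] (Fin 5 → ℂ) where
  toFun y := ![y 0, y 1 / s, y 2 / s, y 3 / s - y 1 / s ^ 2, y 4 / s - y 2 / s ^ 2]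
  map_add' x y := by
    funext i; fin_cases i <;> simp <;> ring
  map_smul' c x := by
    funext i; fin_cases i <;> simp <;> ring

noncomputable def G (u : ℂˣ) : (Fin 5 → ℂ) ≃ₗ[ℂ] (Fin 5 → ℂ) :=
  LinearEquiv.ofLinear (gfun u) (ginv u)
    (by
      have hs : (u : ℂ) ≠ 0 := u.ne_zero
      ext x i
      fin_cases i <;>
        simp [gfun, ginv] <;> field_simp <;> ring)
    (by
      have hs : (u : ℂ) ≠ 0 := u.ne_zero
      ext x i
      fin_cases i <;>
        simp [gfun, ginv] <;> field_simp <;> ring)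

lemma ee_eq (i : Fin 5) : (fun j => if i = j then (1:ℂ) else 0) = ee i := by
  funext j; simp [ee, Pi.single_apply, eq_comm]

lemma mu_expand (μ : (Fin 5 → ℂ) →ₗ[ℂ] (Fin 5 → ℂ) →ₗ[ℂ] (Fin 5 → ℂ))
    (x y : Fin 5 → ℂ) :
    μ x y = ∑ i, ∑ j, (x i * y j) • μ (ee i) (ee j) := by
  conv_lhs => rw [pi_eq_sum_univ x, pi_eq_sum_univ y]
  simp only [ee_eq, map_sum, LinearMap.sum_apply, map_smul, LinearMap.smul_apply,
    smul_smul, Finset.smul_sum]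
  rw [Finset.sum_comm]
  congr 1; funext i; congr 1; funext j; ring_nf

set_option maxHeartbeats 1000000 in
lemma key (μ lam : (Fin 5 → ℂ) →ₗ[ℂ] (Fin 5 → ℂ) →ₗ[ℂ] (Fin 5 → ℂ))
    (hμ : ∀ i j, μ (ee i) (ee j) = cZ27 i j)
    (hlam : ∀ i j, lam (ee i) (ee j) = cZ28 i j)
    (u : ℂˣ) (x y : Fin 5 → ℂ) :
    (G u).symm (μ (G u x) (G u y))
      = lam x y + ((u : ℂ) * x 1 * (y 3 - y 2)) • ee 4 := by
  set s : ℂ := (u : ℂ) with hsdef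
  have hs : s ≠ 0 := u.ne_zero
  have hmu : ∀ u v : Fin 5 → ℂ, μ u v
      = (u 0 * v 1) • ee 2 + (u 0 * v 2) • (-ee 4) + (u 0 * v 3) • ee 4
        + (u 1 * v 0) • ee 3 + (u 1 * v 2) • (-ee 4) + (u 1 * v 3) • ee 4 := by
    intro u v
    rw [mu_expand μ]
    simp only [hμ, Fin.sum_univ_five]
    simp [cZ27]
    abel
  have hla : lam x y
      = (x 0 * y 1) • ee 2 + (x 0 * y 2) • (-ee 4) + (x 0 * y 3) • ee 4
        + (x 1 * y 0) • ee 3 + (x 1 * y 1) • ee 4 := by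
    rw [mu_expand lam]
    simp only [hlam, Fin.sum_univ_five]
    simp [cZ28]
    abel
  have hG : ∀ z, G u z = gfun s z := fun z => rfl
  have hGs : ∀ z, (G u).symm z = ginv s z := fun z => rfl
  rw [hG, hG, hGs, hmu, hla]
  funext i
  fin_cases i <;>
    simp [ginv, gfun, ee, Pi.single_apply] <;>
    field_simp <;> ring

noncomputable def Gt (t : ℂ) : (Fin 5 → ℂ) ≃ₗ[ℂ] (Fin 5 → ℂ) :=
  G (if h : t = 0 then 1 else Units.mk0 t h)

lemma Gt_eq (t : ℂ) (ht : t ≠ 0) : Gt t = G (Units.mk0 t ht) := by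
  rw [Gt, dif_neg ht]

/-- `𝒵₂₇` degenerates to `𝒵₂₈`. -/
theorem Z27_degenerates_to_Z28
    (μ lam : (Fin 5 → ℂ) →ₗ[ℂ] (Fin 5 → ℂ) →ₗ[ℂ] (Fin 5 → ℂ))
    (hμ : ∀ i j, μ (ee i) (ee j) = cZ27 i j)
    (hlam : ∀ i j, lam (ee i) (ee j) = cZ28 i j) :
    ∃ g : ℂ → ((Fin 5 → ℂ) ≃ₗ[ℂ] (Fin 5 → ℂ)),
      ∀ x y : Fin 5 → ℂ,
        Tendsto (fun t : ℂ => (g t).symm (μ (g t x) (g t y)))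
          (𝓝[≠] (0 : ℂ)) (𝓝 (lam x y)) := by
  refine ⟨Gt, fun x y => ?_⟩
  have hlim : Tendsto (fun t : ℂ => lam x y + (t * x 1 * (y 3 - y 2)) • ee 4)
      (𝓝[≠] (0 : ℂ)) (𝓝 (lam x y)) := by
    have hc : Continuous fun t : ℂ => lam x y + (t * x 1 * (y 3 - y 2)) • ee 4 := by
      fun_prop
    have := hc.tendsto 0
    simp only [zero_mul, zero_smul, add_zero] at this
    exact this.mono_left nhdsWithin_le_nhds
  refine Tendsto.congr' ?_ hlim
  filter_upwards [self_mem_nhdsWithin] with t ht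
  replace ht : t ≠ 0 := ht
  rw [Gt_eq t ht, key μ lam hμ hlam (Units.mk0 t ht) x y]
  rfl
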